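/- arXiv:2004.10103 — 2 statements merged into one kernel-verified Lean document; each statement's English description precedes it below -/
import Mathlib

section
/- Let C be a proper closed convex cone in a real Banach space E that is outer regular with linear functional ℓ of norm 1 and constant K ≥ 1 (i.e., (1/K)‖u‖ ≤ ⟨ℓ,u⟩ ≤ ‖u‖ for all u ∈ C), and inner regular with parameter ρ ∈ (0,1]. If x, y lie in the slice C_{ℓ=1}(ρ) = {u ∈ C : ⟨ℓ,u⟩ = 1 and B(u, ρ‖u‖) ⊆ C}, then d_C(x, y) ≤ 2·log(1 + ‖x−y‖/ρ) ≤ (2/ρ)·‖x − y‖. -/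
open Real Metric Set

/-- A proper closed convex cone (Birkhoff cone) in a real normed space. -/
structure IsBirkhoffCone {E : Type*} [NormedAddCommGroup E] [NormedSpace ℝ E]
    (C : Set E) : Prop where
  smul_mem : ∀ t : ℝ, 0 < t → ∀ x ∈ C, t • x ∈ C
  isClosed : IsClosed C
  convex : Convex ℝ C
  proper : C ∩ (-C) = {0}

/-- δ(x,y) = inf { t > 0 : t•x - y ∈ C }. -/
noncomputable def hilbertDelta {E : Type*} [NormedAddCommGroup E] [NormedSpace ℝ E]
    (C : Set E) (x y : E) : ℝ :=
  sInf {t : ℝ | 0 < t ∧ t • x - y ∈ C}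

/-- Hilbert projective metric d_C(x,y) = log(δ(x,y)·δ(y,x)). -/
noncomputable def hilbertDist {E : Type*} [NormedAddCommGroup E] [NormedSpace ℝ E]
    (C : Set E) (x y : E) : ℝ :=
  Real.log (hilbertDelta C x y * hilbertDelta C y x)

/-! If `ℓ x = 1` with `‖ℓ‖ = 1` then `‖x‖ ≥ 1`, so the inner regularity of `x` gives the ball
`closedBall x ρ ⊆ C`. Writing `a = ‖x - y‖ / ρ`, the point `(1 + a) • x - y = a • (x + a⁻¹ • (x - y))`
is a positive multiple of a point of that ball, hence `δ(x, y) ≤ 1 + a`; symmetrically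
`δ(y, x) ≤ 1 + a`, so `d_C(x, y) ≤ 2 log (1 + a) ≤ 2 a`. -/

section

variable {E : Type*} [NormedAddCommGroup E] [NormedSpace ℝ E] {C : Set E}

theorem hilbertDelta_nonneg (C : Set E) (x y : E) : 0 ≤ hilbertDelta C x y :=
  Real.sInf_nonneg fun _ ht => ht.1.le

theorem hilbertDist_le_two_mul_log {x y : E} {b : ℝ} (hb : 1 ≤ b)
    (hxy : hilbertDelta C x y ≤ b) (hyx : hilbertDelta C y x ≤ b) :
    hilbertDist C x y ≤ 2 * log b := by
  have hprod_nonneg := mul_nonneg (hilbertDelta_nonneg C x y) (hilbertDelta_nonneg C y x)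
  have hprod_le : hilbertDelta C x y * hilbertDelta C y x ≤ b ^ 2 :=
    sq b ▸ mul_le_mul hxy hyx (hilbertDelta_nonneg C y x) (by linarith)
  have hlog_sq : log (b ^ 2) = 2 * log b := by rw [log_pow]; norm_num
  rcases hprod_nonneg.eq_or_lt with hzero | hpos
  -- `δ` is the junk value `sInf ∅ = 0` when no `t` works, and then `log 0 = 0`.
  · rw [hilbertDist, ← hzero, log_zero]
    exact mul_nonneg zero_le_two (log_nonneg hb)
  · exact hlog_sq ▸ log_le_log hpos hprod_le

theorem ContinuousLinearMap.one_le_norm_of_apply_eq_one {ℓ : E →L[ℝ] ℝ} (hℓ : ‖ℓ‖ ≤ 1) {x : E}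
    (hx : ℓ x = 1) : 1 ≤ ‖x‖ :=
  calc 1 = ‖ℓ x‖ := by rw [hx, norm_one]
    _ ≤ ‖ℓ‖ * ‖x‖ := ℓ.le_opNorm x
    _ ≤ ‖x‖ := mul_le_of_le_one_left (norm_nonneg x) hℓ

namespace IsBirkhoffCone

variable (hC : IsBirkhoffCone C)
include hC

theorem zero_mem : (0 : E) ∈ C :=
  (hC.proper.symm ▸ rfl : (0 : E) ∈ C ∩ -C).1

theorem closedBall_subset_of_ball_subset {x : E} {r : ℝ} (hr : r ≠ 0) (h : ball x r ⊆ C) :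
    closedBall x r ⊆ C :=
  closure_ball x hr ▸ closure_minimal h hC.isClosed

theorem closedBall_subset_of_apply_eq_one {ℓ : E →L[ℝ] ℝ} (hℓ : ‖ℓ‖ ≤ 1) {ρ : ℝ} (hρ : 0 < ρ)
    {x : E} (hx : ℓ x = 1) (hball : ball x (ρ * ‖x‖) ⊆ C) : closedBall x ρ ⊆ C := by
  refine hC.closedBall_subset_of_ball_subset hρ.ne' ((ball_subset_ball ?_).trans hball)
  exact le_mul_of_one_le_right hρ.le (ℓ.one_le_norm_of_apply_eq_one hℓ hx)

theorem one_add_div_smul_sub_mem {x : E} {r : ℝ} (hr : 0 < r) (h : closedBall x r ⊆ C) (y : E) :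
    (1 + ‖x - y‖ / r) • x - y ∈ C := by
  set a := ‖x - y‖ / r with ha_def
  rcases (show 0 ≤ a by positivity).eq_or_lt with ha | ha
  · have hxy : x = y := by
      rwa [ha_def, eq_comm, div_eq_zero_iff, norm_eq_zero, sub_eq_zero, or_iff_left hr.ne'] at ha
    rw [← ha, add_zero, one_smul, hxy, sub_self]
    exact hC.zero_mem
  · have hnear : x + a⁻¹ • (x - y) ∈ C := by
      refine h ?_
      rw [mem_closedBall, dist_eq_norm, add_sub_cancel_left, norm_smul, norm_inv,
        Real.norm_of_nonneg ha.le, inv_div,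
        div_mul_cancel₀ _ ((div_pos_iff_of_pos_right hr).mp ha).ne']
    have hrewrite : a • (x + a⁻¹ • (x - y)) = (1 + a) • x - y := by
      rw [smul_add, smul_smul, mul_inv_cancel₀ ha.ne', one_smul]
      module
    exact hrewrite ▸ hC.smul_mem a ha _ hnear

theorem hilbertDelta_le_one_add_div {x : E} {r : ℝ} (hr : 0 < r) (h : closedBall x r ⊆ C)
    (y : E) : hilbertDelta C x y ≤ 1 + ‖x - y‖ / r :=
  csInf_le ⟨0, fun _ ht => ht.1.le⟩ ⟨by positivity, hC.one_add_div_smul_sub_mem hr h y⟩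

end IsBirkhoffCone

end

theorem hilbertDist_slice_bound_general
    {E : Type*} [NormedAddCommGroup E] [NormedSpace ℝ E]
    (C : Set E) (hC : IsBirkhoffCone C)
    (ℓ : E →L[ℝ] ℝ) (ρ : ℝ) (hℓ : ‖ℓ‖ = 1) (hρ0 : 0 < ρ)
    (x y : E)
    (hx : x ∈ C ∧ ℓ x = 1 ∧ Metric.ball x (ρ * ‖x‖) ⊆ C)
    (hy : y ∈ C ∧ ℓ y = 1 ∧ Metric.ball y (ρ * ‖y‖) ⊆ C) :
    hilbertDist C x y ≤ 2 * Real.log (1 + ‖x - y‖ / ρ) ∧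
      2 * Real.log (1 + ‖x - y‖ / ρ) ≤ (2 / ρ) * ‖x - y‖ := by
  have ha : 0 ≤ ‖x - y‖ / ρ := by positivity
  have hxy := hC.hilbertDelta_le_one_add_div hρ0
    (hC.closedBall_subset_of_apply_eq_one hℓ.le hρ0 hx.2.1 hx.2.2) y
  have hyx := hC.hilbertDelta_le_one_add_div hρ0
    (hC.closedBall_subset_of_apply_eq_one hℓ.le hρ0 hy.2.1 hy.2.2) x
  rw [norm_sub_rev] at hyx
  refine ⟨hilbertDist_le_two_mul_log (by linarith) hxy hyx, ?_⟩
  have hlog := log_le_sub_one_of_pos (show 0 < 1 + ‖x - y‖ / ρ by linarith)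
  calc 2 * log (1 + ‖x - y‖ / ρ) ≤ 2 * (‖x - y‖ / ρ) := by linarith
    _ = 2 / ρ * ‖x - y‖ := by ring

/-- Corollary A.5 / `corol dC bound`: distance of slice points in `C_{ℓ=1}(ρ)`. -/
theorem hilbertDist_slice_bound
    {E : Type*} [NormedAddCommGroup E] [NormedSpace ℝ E]
    (C : Set E) (hC : IsBirkhoffCone C)
    (ℓ : E →L[ℝ] ℝ) (K ρ : ℝ) (hℓ : ‖ℓ‖ = 1) (hK : 1 ≤ K)
    (houter : ∀ u ∈ C, ‖u‖ / K ≤ ℓ u) (hρ0 : 0 < ρ) (hρ1 : ρ ≤ 1)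
    (x y : E)
    (hx : x ∈ C ∧ ℓ x = 1 ∧ Metric.ball x (ρ * ‖x‖) ⊆ C)
    (hy : y ∈ C ∧ ℓ y = 1 ∧ Metric.ball y (ρ * ‖y‖) ⊆ C) :
    hilbertDist C x y ≤ 2 * Real.log (1 + ‖x - y‖ / ρ) ∧
      2 * Real.log (1 + ‖x - y‖ / ρ) ≤ (2 / ρ) * ‖x - y‖ :=
  hilbertDist_slice_bound_general C hC ℓ ρ hℓ hρ0 x y hx hy
end

section
/- Let E be a Banach space, C ⊆ E a regular Birkhoff cone with outer data (ℓ, K) and inner parameter ρ, and let L ∈ L(E) satisfy L(C\{0}) ⊆ C(ρ)\{0} and (1/θ) ≤ ‖L‖ ≤ θ. Define π(φ) = Lφ/⟨ℓ, Lφ⟩ for φ ∈ C with ⟨ℓ,φ⟩ = 1 and B(φ, ρ‖φ‖) ⊆ C. Then for z ∈ E with ‖z‖ < ρ/(2θ²K): ⟨ℓ, L(φ+z)⟩ ≥ ρ/(2θK) > 0, π(φ+z) is well-defined, and ‖π(φ+z) − π(φ) − Q(φ)z‖ ≤ (4θ²K⁴/ρ²)·‖z‖², where Q(φ)z = ⟨ℓ,Lφ⟩^{−1}·(Lz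 − ⟨ℓ,Lz⟩·π(φ)). -/
open Real Metric Set

/-! The key estimate is `ρ‖L‖ ≤ K⟨ℓ, Lφ⟩`, recalling `‖φ‖ ≥ ℓ φ = 1`: for `‖y‖ < ρ‖φ‖` both
`φ ± y` lie in `C`, so outer regularity gives
`2‖Ly‖ ≤ ‖L(φ + y)‖ + ‖L(φ - y)‖ ≤ K(⟨ℓ, L(φ + y)⟩ + ⟨ℓ, L(φ - y)⟩) = 2K⟨ℓ, Lφ⟩`.
Hence `a = ⟨ℓ, Lφ⟩ ≥ ρ/(θK)` and `b = ⟨ℓ, Lz⟩` satisfies `|b| ≤ ‖L‖‖z‖ ≤ a/2`, while the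
remainder of the fractional linear map is exactly `b²/(a²(a + b))·Lφ - b/(a(a + b))·Lz`,
which is quadratic in `z`. -/

section

variable {E F : Type*} [NormedAddCommGroup E] [NormedSpace ℝ E]
  [NormedAddCommGroup F] [NormedSpace ℝ F]

theorem norm_apply_le_of_norm_le_on_ball {T : E →L[ℝ] F} {ψ : E →L[ℝ] ℝ} {φ y : E} {r : ℝ}
    (hr : 0 < r) (h : ∀ u ∈ ball φ r, ‖T u‖ ≤ ψ u) (hy : ‖y‖ ≤ r) : ‖T y‖ ≤ ψ φ := by
  have hclosed : closedBall φ r ⊆ {u | ‖T u‖ ≤ ψ u} := by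
    rw [← closure_ball φ hr.ne']
    exact closure_minimal h (isClosed_le (by fun_prop) (by fun_prop))
  have hplus : ‖T (φ + y)‖ ≤ ψ (φ + y) := hclosed (by simpa [dist_eq_norm] using hy)
  have hminus : ‖T (φ - y)‖ ≤ ψ (φ - y) := hclosed (by simpa [dist_eq_norm] using hy)
  have htwo : (2 : ℝ) • T y = T (φ + y) - T (φ - y) := by
    simp only [map_add, map_sub]; module
  have hsum : ψ (φ + y) + ψ (φ - y) = 2 * ψ φ := by
    simp only [map_add, map_sub]; ring
  have hdiff := norm_sub_le (T (φ + y)) (T (φ - y))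
  rw [← htwo, norm_smul, Real.norm_two] at hdiff
  linarith

theorem mul_opNorm_le_of_norm_le_on_ball {T : E →L[ℝ] F} {ψ : E →L[ℝ] ℝ} {φ : E} {r : ℝ}
    (hr : 0 < r) (h : ∀ u ∈ ball φ r, ‖T u‖ ≤ ψ u) : r * ‖T‖ ≤ ψ φ := by
  have hψ : 0 ≤ ψ φ / r := by
    have h0 := norm_apply_le_of_norm_le_on_ball hr h (y := 0) (by simpa using hr.le)
    exact div_nonneg ((norm_nonneg _).trans h0) hr.le
  rw [← le_div_iff₀' hr]
  refine T.opNorm_le_bound hψ fun x => ?_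
  rcases eq_or_ne x 0 with rfl | hx
  · simp
  have hxpos : 0 < ‖x‖ := norm_pos_iff.mpr hx
  have hscaled := norm_apply_le_of_norm_le_on_ball hr h (y := (r / ‖x‖) • x)
    (by rw [norm_smul, Real.norm_of_nonneg (by positivity), div_mul_cancel₀ _ hxpos.ne'])
  rw [map_smul, norm_smul, Real.norm_of_nonneg (by positivity), div_mul_eq_mul_div,
    div_le_iff₀ hxpos] at hscaled
  rw [div_mul_eq_mul_div, le_div_iff₀ hr]
  linarith

theorem norm_apply_le_of_mapsTo_outer {C : Set E} {D : Set F} {T : E →L[ℝ] F}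
    {ℓ : F →L[ℝ] ℝ} {K : ℝ} (hK : 0 < K) (houter : ∀ u ∈ D, ‖u‖ / K ≤ ℓ u)
    (hT : ∀ x ∈ C \ {0}, T x ∈ D) {x : E} (hx : x ∈ C) : ‖T x‖ ≤ K * ℓ (T x) := by
  rcases eq_or_ne x 0 with rfl | hx0
  · simp
  · exact (div_le_iff₀' hK).mp (houter _ (hT x ⟨hx, hx0⟩))

theorem mul_opNorm_le_of_ball_subset {C : Set E} {D : Set F} {T : E →L[ℝ] F}
    {ℓ : F →L[ℝ] ℝ} {K : ℝ} (hK : 0 < K) (houter : ∀ u ∈ D, ‖u‖ / K ≤ ℓ u)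
    (hT : ∀ x ∈ C \ {0}, T x ∈ D) {φ : E} {r : ℝ} (hr : 0 < r) (hball : ball φ r ⊆ C) :
    r * ‖T‖ ≤ K * ℓ (T φ) := by
  simpa using mul_opNorm_le_of_norm_le_on_ball (ψ := K • ℓ.comp T) hr fun u hu => by
    simpa using norm_apply_le_of_mapsTo_outer hK houter hT (hball hu)

theorem inv_smul_add_sub_sub_eq {a b : ℝ} (ha : a ≠ 0) (hab : a + b ≠ 0) (u v : F) :
    (a + b)⁻¹ • (u + v) - a⁻¹ • u - a⁻¹ • (v - b • (a⁻¹ • u)) =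
      (b ^ 2 / (a ^ 2 * (a + b))) • u - (b / (a * (a + b))) • v := by
  match_scalars <;> field_simp <;> ring

theorem norm_inv_smul_add_sub_sub_le {a b K M : ℝ} {u v : F} (ha : 0 < a) (hbM : |b| ≤ M)
    (hba : |b| ≤ a / 2) (hu : ‖u‖ ≤ K * a) (hv : ‖v‖ ≤ M) :
    ‖(a + b)⁻¹ • (u + v) - a⁻¹ • u - a⁻¹ • (v - b • (a⁻¹ • u))‖ ≤
      2 * (K + 1) * M ^ 2 / a ^ 2 := by
  have hab : a / 2 ≤ a + b := by linarith [neg_abs_le b]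
  have hab' : 0 < a + b := by linarith
  have hK : 0 ≤ K := nonneg_of_mul_nonneg_left ((norm_nonneg u).trans hu) ha
  have hM : 0 ≤ M := (abs_nonneg b).trans hbM
  have hb2 : b ^ 2 ≤ M ^ 2 := by rw [← sq_abs]; gcongr
  rw [inv_smul_add_sub_sub_eq ha.ne' hab'.ne']
  calc _ ≤ ‖(b ^ 2 / (a ^ 2 * (a + b))) • u‖ + ‖(b / (a * (a + b))) • v‖ := norm_sub_le _ _
    _ = b ^ 2 / (a ^ 2 * (a + b)) * ‖u‖ + |b| / (a * (a + b)) * ‖v‖ := by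
      rw [norm_smul, norm_smul, Real.norm_of_nonneg (by positivity), Real.norm_eq_abs, abs_div,
        abs_of_pos (mul_pos ha hab')]
    _ ≤ M ^ 2 / (a ^ 2 * (a / 2)) * (K * a) + M / (a * (a / 2)) * M := by gcongr
    _ = 2 * (K + 1) * M ^ 2 / a ^ 2 := by field_simp

end

theorem two_mul_add_one_mul_sq_le {θ K : ℝ} (hθ : 1 ≤ θ) (hK : 1 ≤ K) :
    2 * (K + 1) * K ^ 2 ≤ 4 * θ ^ 2 * K ^ 4 := by
  have hK23 : K ^ 2 ≤ K ^ 3 := pow_le_pow_right₀ hK (by norm_num)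
  have hK34 : K ^ 3 ≤ K ^ 4 := pow_le_pow_right₀ hK (by norm_num)
  nlinarith [mul_le_mul_of_nonneg_right (one_le_pow₀ (n := 2) hθ) (by positivity : 0 ≤ K ^ 4)]

theorem fractional_linear_quadratic_expansion_general
    {E : Type*} [NormedAddCommGroup E] [NormedSpace ℝ E]
    (C : Set E)
    (ℓ : E →L[ℝ] ℝ) (θ K ρ : ℝ) (hℓ : ‖ℓ‖ = 1)
    (hθ : 1 ≤ θ) (hK : 1 ≤ K) (hρ0 : 0 < ρ)
    (houter : ∀ u ∈ C, ‖u‖ / K ≤ ℓ u)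
    (L : E →L[ℝ] E)
    (hL : ∀ x ∈ C \ {0}, L x ∈ C \ {0} ∧ Metric.ball (L x) (ρ * ‖L x‖) ⊆ C)
    (hLn : 1 / θ ≤ ‖L‖ ∧ ‖L‖ ≤ θ)
    (φ : E) (hφC : φ ∈ C) (hφℓ : ℓ φ = 1) (hφρ : Metric.ball φ (ρ * ‖φ‖) ⊆ C)
    (z : E) (hz : ‖z‖ < ρ / (2 * θ ^ 2 * K)) :
    ρ / (2 * θ * K) ≤ ℓ (L (φ + z)) ∧
    ‖(ℓ (L (φ + z)))⁻¹ • L (φ + z) - (ℓ (L φ))⁻¹ • L φ -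
        (ℓ (L φ))⁻¹ • (L z - ℓ (L z) • ((ℓ (L φ))⁻¹ • L φ))‖ ≤
      4 * θ ^ 2 * K ^ 4 / ρ ^ 2 * ‖z‖ ^ 2 := by
  have hθ0 : 0 < θ := by linarith
  have hK0 : 0 < K := by linarith
  have hLC : ∀ x ∈ C \ {0}, L x ∈ C := fun x hx => (hL x hx).1.1
  have hφ : 1 ≤ ‖φ‖ := by simpa [hφℓ, hℓ] using ℓ.le_opNorm φ
  set a := ℓ (L φ)
  set b := ℓ (L z)
  have hρL : ρ * ‖L‖ ≤ K * a :=
    (mul_le_mul_of_nonneg_right (le_mul_of_one_le_right hρ0.le hφ) (norm_nonneg L)).trans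
      (mul_opNorm_le_of_ball_subset hK0 houter hLC (by positivity) hφρ)
  have ha : ρ / (θ * K) ≤ a := by
    rw [div_le_iff₀ (by positivity)]
    calc ρ ≤ ρ * (θ * ‖L‖) := le_mul_of_one_le_right hρ0.le ((div_le_iff₀' hθ0).mp hLn.1)
      _ ≤ a * (θ * K) := by nlinarith
  have ha0 : 0 < a := lt_of_lt_of_le (by positivity) ha
  have hb : |b| ≤ ‖L‖ * ‖z‖ := by
    simpa [hℓ] using (ℓ.comp L).le_of_opNorm_le (ℓ.opNorm_comp_le L) z
  have hzK : ‖z‖ ≤ ρ / (2 * K) := hz.le.trans <|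
    div_le_div_of_nonneg_left hρ0.le (by positivity) (by nlinarith [one_le_pow₀ (n := 2) hθ])
  have hLz : ‖L‖ * ‖z‖ ≤ a / 2 :=
    calc ‖L‖ * ‖z‖ ≤ ‖L‖ * (ρ / (2 * K)) := by gcongr
      _ = ρ * ‖L‖ / (2 * K) := by ring
      _ ≤ K * a / (2 * K) := by gcongr
      _ = a / 2 := by field_simp
  refine ⟨?_, ?_⟩
  · calc ρ / (2 * θ * K) = ρ / (θ * K) / 2 := by ring
      _ ≤ a / 2 := by gcongr
      _ ≤ a + b := by linarith [neg_abs_le b]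
      _ = ℓ (L (φ + z)) := by simp only [map_add, a, b]
  · simp only [map_add]
    have hLa : ‖L‖ / a ≤ K / ρ := by rw [div_le_div_iff₀ ha0 hρ0]; linarith
    calc _ ≤ 2 * (K + 1) * (‖L‖ * ‖z‖) ^ 2 / a ^ 2 :=
          norm_inv_smul_add_sub_sub_le ha0 hb (hb.trans hLz)
            (norm_apply_le_of_mapsTo_outer hK0 houter hLC hφC) (L.le_opNorm z)
      _ = 2 * (K + 1) * (‖L‖ / a) ^ 2 * ‖z‖ ^ 2 := by ring
      _ ≤ 2 * (K + 1) * (K / ρ) ^ 2 * ‖z‖ ^ 2 := by gcongr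
      _ = 2 * (K + 1) * K ^ 2 / ρ ^ 2 * ‖z‖ ^ 2 := by ring
      _ ≤ 4 * θ ^ 2 * K ^ 4 / ρ ^ 2 * ‖z‖ ^ 2 := by
        gcongr ?_ / _ * _; exact two_mul_add_one_mul_sq_le hθ hK

/-- Lemma `lem:Qop` (single-fiber version): quadratic expansion of the
fractional linear map `π(φ) = Lφ/⟨ℓ,Lφ⟩` around a slice point, with explicit
derivative `Q(φ)z = ⟨ℓ,Lφ⟩⁻¹(Lz - ⟨ℓ,Lz⟩π(φ))`. -/
theorem fractional_linear_quadratic_expansion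
    {E : Type*} [NormedAddCommGroup E] [NormedSpace ℝ E]
    (C : Set E) (hC : IsBirkhoffCone C)
    (ℓ : E →L[ℝ] ℝ) (θ K ρ : ℝ) (hℓ : ‖ℓ‖ = 1)
    (hθ : 1 ≤ θ) (hK : 1 ≤ K) (hρ0 : 0 < ρ) (hρ1 : ρ ≤ 1)
    (houter : ∀ u ∈ C, ‖u‖ / K ≤ ℓ u)
    (L : E →L[ℝ] E)
    (hL : ∀ x ∈ C \ {0}, L x ∈ C \ {0} ∧ Metric.ball (L x) (ρ * ‖L x‖) ⊆ C)
    (hLn : 1 / θ ≤ ‖L‖ ∧ ‖L‖ ≤ θ)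
    (φ : E) (hφC : φ ∈ C) (hφℓ : ℓ φ = 1) (hφρ : Metric.ball φ (ρ * ‖φ‖) ⊆ C)
    (z : E) (hz : ‖z‖ < ρ / (2 * θ ^ 2 * K)) :
    ρ / (2 * θ * K) ≤ ℓ (L (φ + z)) ∧
    ‖(ℓ (L (φ + z)))⁻¹ • L (φ + z) - (ℓ (L φ))⁻¹ • L φ -
        (ℓ (L φ))⁻¹ • (L z - ℓ (L z) • ((ℓ (L φ))⁻¹ • L φ))‖ ≤
      4 * θ ^ 2 * K ^ 4 / ρ ^ 2 * ‖z‖ ^ 2 :=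
  fractional_linear_quadratic_expansion_general C ℓ θ K ρ hℓ hθ hK hρ0 houter L hL hLn φ hφC hφℓ hφρ
    z hz
end
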